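/- Let k be a field and A a finite-dimensional symmetric k-algebra. Let X --f--> M' --g--> Y → X⟦1⟧ be a distinguished triangle in K^b(proj A) and let M be an object of K^b(proj A). If for every i ∈ ℤ every morphism X → M⟦i⟧ in K^b(proj A) factors through f, then for every i ∈ ℤ every morphism M⟦i⟧ → Y in K^b(proj A) factors through g. -/

import Mathlib

open CategoryTheory Category Limits

set_option linter.unusedSectionVars false

namespace ForPaper

section LocalizationLinear

variable {C D : Type*} [Category C] [Category D] (L : C ⥤ D) (W : MorphismProperty C)
  [L.IsLocalization W] [Preadditive C] [Preadditive D] [L.Additive]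
  (R : Type*) [CommSemiring R] [CategoryTheory.Linear R C]

/-- The "multiplication by a scalar" natural endomorphism of the identity functor of
a localized category. -/
noncomputable def eta (a : R) : 𝟭 D ⟶ 𝟭 D :=
  Localization.liftNatTrans L W L L (𝟭 D) (𝟭 D)
    { app := fun X => L.map (a • 𝟙 X)
      naturality := fun X Y f => by
        rw [← L.map_comp, ← L.map_comp, Linear.smul_comp, Linear.comp_smul, id_comp, comp_id] }

lemma eta_app (a : R) (X : C) : (eta L W R a).app (L.obj X) = L.map (a • 𝟙 X) := by
  simp [eta, Localization.liftNatTrans_app]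

lemma eta_one : eta L W R 1 = 𝟙 (𝟭 D) :=
  Localization.natTrans_ext L W (fun X => by simp [eta_app])

lemma eta_mul (a b : R) : eta L W R (a * b) = eta L W R a ≫ eta L W R b :=
  Localization.natTrans_ext L W (fun X => by
    simp only [eta_app, NatTrans.comp_app, Functor.id_obj, eta_app, ← L.map_comp,
      Linear.smul_comp, Linear.comp_smul, id_comp, smul_smul, mul_comm a b])

lemma eta_add (a b : R) : eta L W R (a + b) = eta L W R a + eta L W R b :=
  Localization.natTrans_ext L W (fun X => by
    rw [eta_app, NatTrans.app_add, eta_app, eta_app, ← Functor.map_add, add_smul])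

lemma eta_zero : eta L W R 0 = 0 :=
  Localization.natTrans_ext L W (fun X => by
    simp [eta_app])

lemma eta_naturality (a : R) {P Q : D} (f : P ⟶ Q) :
    (eta L W R a).app P ≫ f = f ≫ (eta L W R a).app Q := by
  simpa using ((eta L W R a).naturality f).symm

/-- The `R`-linear structure on a category obtained by localization of an `R`-linear
category; it is characterized by the fact that the localization functor is `R`-linear. -/
noncomputable def localizationLinear : CategoryTheory.Linear R D where
  homModule P Q :=
    { smul := fun a f => (eta L W R a).app P ≫ f
      one_smul := fun f => by
        show (eta L W R 1).app P ≫ f = f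
        rw [eta_one]; simp
      mul_smul := fun a b f => by
        show (eta L W R (a * b)).app P ≫ f = (eta L W R a).app P ≫ ((eta L W R b).app P ≫ f)
        rw [eta_mul]; simp
      smul_zero := fun a => comp_zero
      smul_add := fun a f g => Preadditive.comp_add _ _ _ _ _ _
      add_smul := fun a b f => by
        show (eta L W R (a + b)).app P ≫ f =
          (eta L W R a).app P ≫ f + (eta L W R b).app P ≫ f
        rw [eta_add]; simp [Preadditive.add_comp]
      zero_smul := fun f => by
        show (eta L W R 0).app P ≫ f = 0
        rw [eta_zero]; simp }
  smul_comp P Q T a f g := by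
    show ((eta L W R a).app P ≫ f) ≫ g = (eta L W R a).app P ≫ (f ≫ g)
    rw [assoc]
  comp_smul P Q T f a g := by
    show f ≫ ((eta L W R a).app Q ≫ g) = (eta L W R a).app P ≫ (f ≫ g)
    rw [← assoc, ← eta_naturality, assoc]

end LocalizationLinear

universe u v

/-- Two `k`-algebras are *derived equivalent* if there is a `k`-linear equivalence
between the (unbounded) derived categories of their module categories which commutes
with the shift functors and preserves distinguished triangles. -/
def DerivedEquivalent (k : Type*) [Field k] (Λ : Type u) [Ring Λ] [Algebra k Λ]
    (Γ : Type v) [Ring Γ] [Algebra k Γ] : Prop :=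
  letI : HasDerivedCategory (ModuleCat.{u} Λ) := HasDerivedCategory.standard _
  letI : HasDerivedCategory (ModuleCat.{v} Γ) := HasDerivedCategory.standard _
  letI : CategoryTheory.Linear k (DerivedCategory (ModuleCat.{u} Λ)) :=
    ForPaper.localizationLinear DerivedCategory.Qh
      (HomotopyCategory.subcategoryAcyclic (ModuleCat.{u} Λ)).trW k
  letI : CategoryTheory.Linear k (DerivedCategory (ModuleCat.{v} Γ)) :=
    ForPaper.localizationLinear DerivedCategory.Qh
      (HomotopyCategory.subcategoryAcyclic (ModuleCat.{v} Γ)).trW k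
  ∃ (F : DerivedCategory (ModuleCat.{u} Λ) ⥤ DerivedCategory (ModuleCat.{v} Γ))
    (c : F.CommShift ℤ) (a : F.Additive),
      F.IsEquivalence ∧ (letI := c; F.IsTriangulated) ∧ (letI := a; F.Linear k)

/-- A bounded complex of finitely generated projective modules. -/
def IsPerfect {A : Type u} [Ring A] (X : CochainComplex (ModuleCat.{u} A) ℤ) : Prop :=
  (∀ n : ℤ, Module.Finite A (X.X n) ∧ Module.Projective A (X.X n)) ∧
  (∃ a b : ℤ, ∀ n : ℤ, (n < a ∨ b < n) → IsZero (X.X n))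

/-- A finite-dimensional algebra is *symmetric* if it admits a linear form `lam` such that
`lam (a * b) = lam (b * a)` for all `a`, `b`, and such that the associated trace bilinear
form `(a, b) ↦ lam (a * b)` is nondegenerate. -/
def IsSymmetricAlgebra (k : Type*) [Field k] (A : Type*) [Ring A] [Algebra k A] : Prop :=
  ∃ lam : A →ₗ[k] k, (∀ a b : A, lam (a * b) = lam (b * a)) ∧
    (∀ a : A, (∀ b : A, lam (a * b) = 0) → a = 0)

end ForPaper

open ForPaper Pretriangulated

/-- The quotient functor from complexes to `K(Mod A)`. -/
noncomputable abbrev Kq (A : Type u) [Ring A] :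
    CochainComplex (ModuleCat.{u} A) ℤ ⥤
      HomotopyCategory (ModuleCat.{u} A) (ComplexShape.up ℤ) :=
  HomotopyCategory.quotient _ _

/-!
Every map `X ⟶ M⟦i-1⟧` factors through `f` and `h ≫ f⟦1⟧ = 0`, so `h` kills every map
`X⟦1⟧ ⟶ M⟦i⟧`. Hence `α = v ≫ h : M⟦i⟧ ⟶ X⟦1⟧` satisfies `α ≫ β = 0` for all
`β : X⟦1⟧ ⟶ M⟦i⟧`, and it suffices to show `α = 0`: then `v` factors through `g`.

This is the nondegeneracy of the trace pairing on `K^b(proj A)`, which is `0`-Calabi–Yau. A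
symmetrizing form `λ` induces a trace on endomorphisms of finitely generated projective modules,
and `⟨φ, ψ⟩ = Σₘ (-1)ᵐ tr((φ ≫ ψ)ₘ)` is a perfect pairing between the finite-dimensional
Hom-complexes in degrees `-1` and `1`. The supertrace vanishes on coboundaries, so `δ` is
skew-adjoint and `⟨α, β⟩ = 0` for all chain maps `β`. Thus `⟨α, -⟩` vanishes on `0`-cocycles,
factors through `δ`, and equals `⟨w, δ -⟩ = -⟨δ w, -⟩` for some `w`; by nondegeneracy
`α = -δ w` is null-homotopic.
-/

universe u

open CochainComplex.HomComplex in
lemma CochainComplex.HomComplex.δ_eq_comp_diff_add_diff_comp {C : Type*} [Category C]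
    [Preadditive C] {F G : CochainComplex C ℤ} {n m : ℤ} (hnm : n + 1 = m) (z : Cochain F G n) :
    δ n m z = z.comp (Cochain.diff G) hnm + m.negOnePow • (Cochain.diff F).comp z (by omega) := by
  ext p q hpq
  rw [δ_v n m hnm z p q hpq (q - 1) (p + 1) rfl rfl, Cochain.add_v, Cochain.units_smul_v,
    Cochain.comp_v _ _ hnm p (q - 1) q (by omega) (by omega),
    Cochain.comp_v _ _ _ p (p + 1) q rfl (by omega)]
  simp

theorem CategoryTheory.Pretriangulated.mor₃_comp_eq_zero_of_forall_factor {C : Type*}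
    [Category C] [Preadditive C] [HasZeroObject C] [HasShift C ℤ]
    [∀ n : ℤ, (shiftFunctor C n).Additive] [Pretriangulated C] (T : Triangle C)
    (hT : T ∈ distTriang C) {N : C} (hN : ∀ u : T.obj₁ ⟶ N⟦(-1 : ℤ)⟧, ∃ v, u = T.mor₁ ≫ v)
    (γ : T.obj₁⟦(1 : ℤ)⟧ ⟶ N) : T.mor₃ ≫ γ = 0 := by
  let e := (shiftFunctorCompIsoId C (-1 : ℤ) 1 (neg_add_cancel 1)).app N
  obtain ⟨u, hu⟩ := (shiftFunctor C (1 : ℤ)).map_surjective (γ ≫ e.inv)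
  obtain ⟨v, rfl⟩ := hN u
  rw [← cancel_mono e.inv, assoc, ← hu, Functor.map_comp, comp_distTriang_mor_zero₃₁_assoc _ hT,
    zero_comp, zero_comp]

theorem ForPaper.IsPerfect.shift {A : Type u} [Ring A] {X : CochainComplex (ModuleCat.{u} A) ℤ}
    (hX : IsPerfect X) (n : ℤ) : IsPerfect (X⟦n⟧) :=
  let ⟨a, b, hab⟩ := hX.2
  ⟨fun m => hX.1 (m + n), a - n, b - n, fun m hm => hab (m + n) (by omega)⟩

namespace SymmetricAlgebra

variable {k : Type*} {A : Type u} [Field k] [Ring A] [Algebra k A] (lam : A →ₗ[k] k)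

section FreeModule

lemma apply_eq_sum_single {m n : ℕ} (w : ModuleCat.of A (Fin m → A) ⟶ ModuleCat.of A (Fin n → A))
    (x : Fin m → A) (i : Fin n) : w x i = ∑ j, x j * w (Pi.single j 1) i := by
  conv_lhs => rw [← Finset.univ_sum_single x]
  simp only [map_sum, Finset.sum_apply]
  refine Finset.sum_congr rfl fun j _ => ?_
  have hx : Pi.single j (x j) = x j • (Pi.single j 1 : Fin m → A) := by
    ext; simp [Pi.single_apply]
  rw [hx, map_smul]
  rfl

def freeTrace {n : ℕ} (u : ModuleCat.of A (Fin n → A) ⟶ ModuleCat.of A (Fin n → A)) : k :=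
  ∑ j, lam (u (Pi.single j 1) j)

lemma freeTrace_comp_comm (hlam : ∀ a b : A, lam (a * b) = lam (b * a)) {m n : ℕ}
    (u : ModuleCat.of A (Fin m → A) ⟶ ModuleCat.of A (Fin n → A))
    (v : ModuleCat.of A (Fin n → A) ⟶ ModuleCat.of A (Fin m → A)) :
    freeTrace lam (u ≫ v) = freeTrace lam (v ≫ u) := by
  simp only [freeTrace, ConcreteCategory.comp_apply, apply_eq_sum_single v (u _),
    apply_eq_sum_single u (v _), map_sum]
  rw [Finset.sum_comm]
  exact Finset.sum_congr rfl fun i _ => Finset.sum_congr rfl fun j _ => hlam _ _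

lemma eq_zero_of_forall_freeTrace_comp_eq_zero (hnd : ∀ a : A, (∀ b : A, lam (a * b) = 0) → a = 0)
    {m n : ℕ} (u : ModuleCat.of A (Fin m → A) ⟶ ModuleCat.of A (Fin n → A))
    (h : ∀ v, freeTrace lam (u ≫ v) = 0) : u = 0 := by
  ext j i
  refine hnd _ fun c => ?_
  -- test against the elementary matrix sending `x` to `x i * c` in position `j`
  let v : ModuleCat.of A (Fin n → A) ⟶ ModuleCat.of A (Fin m → A) := ModuleCat.ofHom
    (LinearMap.single A (fun _ => A) j ∘ₗ LinearMap.mulRight A c ∘ₗ LinearMap.proj i)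
  simpa [freeTrace, v, Pi.single_apply, apply_ite lam] using h v

end FreeModule

structure FreeRetract (M : ModuleCat.{u} A) where
  rank : ℕ
  retract : Retract M (ModuleCat.of A (Fin rank → A))

noncomputable def FreeRetract.ofFiniteProjective (M : ModuleCat.{u} A) (h₁ : Module.Finite A M)
    (h₂ : Module.Projective A M) : FreeRetract M :=
  let h := Module.Finite.exists_comp_eq_id_of_projective A M
  { rank := h.choose
    retract :=
      { i := ModuleCat.ofHom h.choose_spec.choose_spec.choose
        r := ModuleCat.ofHom h.choose_spec.choose
        retract := ModuleCat.hom_ext h.choose_spec.choose_spec.choose_spec.2.2 } }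

section Trace

variable {M N : ModuleCat.{u} A}

def trace (s : FreeRetract M) : (M ⟶ M) →ₗ[k] k where
  toFun e := freeTrace lam (s.retract.r ≫ e ≫ s.retract.i)
  map_add' e e' := by simp [freeTrace, Finset.sum_add_distrib]
  map_smul' c e := by
    simp only [freeTrace, Finset.mul_sum, smul_eq_mul, RingHom.id_apply]
    refine Finset.sum_congr rfl fun j _ => ?_
    rw [Linear.smul_comp, Linear.comp_smul, ← smul_eq_mul, ← map_smul, Algebra.smul_def]
    rfl

lemma trace_apply (s : FreeRetract M) (e : M ⟶ M) :
    trace lam s e = freeTrace lam (s.retract.r ≫ e ≫ s.retract.i) := rfl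

lemma trace_comp_comm (hlam : ∀ a b : A, lam (a * b) = lam (b * a)) (sM : FreeRetract M)
    (sN : FreeRetract N) (f : M ⟶ N) (g : N ⟶ M) :
    trace lam sM (f ≫ g) = trace lam sN (g ≫ f) := by
  have := freeTrace_comp_comm lam hlam (sM.retract.r ≫ f ≫ sN.retract.i)
    (sN.retract.r ≫ g ≫ sM.retract.i)
  simpa [trace_apply] using this

lemma eq_zero_of_forall_trace_comp_eq_zero (hlam : ∀ a b : A, lam (a * b) = lam (b * a))
    (hnd : ∀ a : A, (∀ b : A, lam (a * b) = 0) → a = 0) (sM : FreeRetract M)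
    (sN : FreeRetract N) (f : M ⟶ N) (h : ∀ g : N ⟶ M, trace lam sM (f ≫ g) = 0) : f = 0 := by
  have hfree : sM.retract.r ≫ f ≫ sN.retract.i = 0 := by
    refine eq_zero_of_forall_freeTrace_comp_eq_zero lam hnd _ fun v => ?_
    have := freeTrace_comp_comm lam hlam (sM.retract.r ≫ sM.retract.i)
      ((sM.retract.r ≫ f ≫ sN.retract.i) ≫ v)
    simp only [assoc, Retract.retract_assoc] at this
    simpa [this, trace_apply] using h (sN.retract.i ≫ v ≫ sM.retract.r)
  simpa using sM.retract.i ≫= hfree =≫ sN.retract.r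

lemma finiteDimensional_hom [FiniteDimensional k A] (sM : FreeRetract M) (sN : FreeRetract N) :
    FiniteDimensional k (M ⟶ N) := by
  let Φ : (M ⟶ N) →ₗ[k] (Fin sM.rank → Fin sN.rank → A) :=
    { toFun f j := (sM.retract.r ≫ f ≫ sN.retract.i) (Pi.single j 1)
      map_add' f f' := by ext; simp
      map_smul' c f := by
        ext j i
        rw [Linear.smul_comp, Linear.comp_smul]
        exact (Algebra.smul_def c _).symm }
  refine FiniteDimensional.of_injective Φ ((injective_iff_map_eq_zero Φ).2 fun f hf => ?_)
  have hfree : sM.retract.r ≫ f ≫ sN.retract.i = 0 := by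
    ext j i
    exact congrFun (congrFun hf j) i
  simpa using sM.retract.i ≫= hfree =≫ sN.retract.r

end Trace

section Cochain

open CochainComplex HomComplex

variable {P Q : CochainComplex (ModuleCat.{u} A) ℤ} (sP : ∀ m, FreeRetract (P.X m)) (S : Finset ℤ)

/-- The sign `(-1)ᵐ` is what makes `δ` skew-adjoint for `pairing` (`pairing_δ_left`). -/
def supertrace : Cochain P P 0 →ₗ[k] k where
  toFun z := ∑ m ∈ S, m.negOnePow • trace lam (sP m) (z.v m m (add_zero m))
  map_add' z z' := by simp [Finset.sum_add_distrib]
  map_smul' c z := by simp [Finset.mul_sum, mul_smul_comm]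

lemma supertrace_apply (z : Cochain P P 0) :
    supertrace lam sP S z = ∑ m ∈ S, m.negOnePow • trace lam (sP m) (z.v m m (add_zero m)) := rfl

def pairing {n n' : ℤ} (h : n + n' = 0) : Cochain P Q n →ₗ[k] Cochain Q P n' →ₗ[k] k :=
  LinearMap.mk₂ k (fun φ ψ => supertrace lam sP S (φ.comp ψ h))
    (fun φ φ' ψ => by simp [Cochain.add_comp]) (fun c φ ψ => by simp [Cochain.smul_comp])
    (fun φ ψ ψ' => by simp [Cochain.comp_add]) (fun c φ ψ => by simp [Cochain.comp_smul])

lemma pairing_apply {n n' : ℤ} (h : n + n' = 0) (φ : Cochain P Q n) (ψ : Cochain Q P n') :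
    pairing lam sP S h φ ψ = supertrace lam sP S (φ.comp ψ h) := rfl

variable {S}

lemma support_supertrace_summand_subset (hP : ∀ m ∉ S, IsZero (P.X m)) (z : Cochain P P 0) :
    Function.support (fun m => m.negOnePow • trace lam (sP m) (z.v m m (add_zero m))) ⊆ S := by
  intro m hm
  by_contra hmS
  apply hm
  dsimp only
  rw [(hP m hmS).eq_of_src (z.v m m _) 0, map_zero, smul_zero]

lemma supertrace_eq_finsum (hP : ∀ m ∉ S, IsZero (P.X m)) (z : Cochain P P 0) :
    supertrace lam sP S z = ∑ᶠ m, m.negOnePow • trace lam (sP m) (z.v m m (add_zero m)) :=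
  (finsum_eq_finsetSum_of_support_subset _ (support_supertrace_summand_subset lam sP hP z)).symm

lemma supertrace_comp_comm (hlam : ∀ a b : A, lam (a * b) = lam (b * a))
    (sQ : ∀ m, FreeRetract (Q.X m)) {T : Finset ℤ} (hP : ∀ m ∉ S, IsZero (P.X m))
    (hQ : ∀ m ∉ T, IsZero (Q.X m)) {n n' : ℤ} (φ : Cochain P Q n) (ψ : Cochain Q P n')
    (h : n + n' = 0) (h' : n' + n = 0) :
    supertrace lam sP S (φ.comp ψ h) = n.negOnePow • supertrace lam sQ T (ψ.comp φ h') := by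
  symm
  rw [supertrace_eq_finsum lam sQ hQ, supertrace_eq_finsum lam sP hP,
    smul_finsum' _ (T.finite_toSet.subset (support_supertrace_summand_subset lam sQ hQ _)),
    ← finsum_comp_equiv (Equiv.addRight n)]
  refine finsum_congr fun m => ?_
  rw [Equiv.coe_addRight, Cochain.comp_v φ ψ h m (m + n) m rfl (by omega),
    Cochain.comp_v ψ φ h' (m + n) m (m + n) (by omega) rfl,
    trace_comp_comm lam hlam (sQ (m + n)) (sP m), smul_smul, ← Int.negOnePow_add,
    show n + (m + n) = m + 2 * n by ring, Int.negOnePow_add, Int.negOnePow_two_mul, mul_one]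

lemma supertrace_δ_eq_zero (hlam : ∀ a b : A, lam (a * b) = lam (b * a))
    (hP : ∀ m ∉ S, IsZero (P.X m)) (z : Cochain P P (-1)) :
    supertrace lam sP S (δ (-1) 0 z) = 0 := by
  rw [δ_eq_comp_diff_add_diff_comp (neg_add_cancel 1), map_add,
    supertrace_comp_comm lam sP hlam sP hP hP z _ _ (add_neg_cancel 1)]
  simp

lemma pairing_δ_left (hlam : ∀ a b : A, lam (a * b) = lam (b * a))
    (hP : ∀ m ∉ S, IsZero (P.X m)) (w : Cochain P Q (-1)) (ψ : Cochain Q P 0) :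
    pairing lam sP S (add_zero 0) (δ (-1) 0 w) ψ =
      -pairing lam sP S (neg_add_cancel 1) w (δ 0 1 ψ) := by
  have := supertrace_δ_eq_zero lam sP hlam hP (w.comp ψ (add_zero (-1)))
  rw [δ_comp w ψ (add_zero (-1)) 0 1 0 (neg_add_cancel 1) (neg_add_cancel 1) (zero_add 1),
    Int.negOnePow_zero, one_smul, map_add] at this
  rw [pairing_apply, pairing_apply, eq_neg_iff_add_eq_zero, add_comm, ← this]

lemma pairing_ofHom_eq_zero_of_homotopy (hlam : ∀ a b : A, lam (a * b) = lam (b * a))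
    (hP : ∀ m ∉ S, IsZero (P.X m)) {α : P ⟶ Q} {β : Q ⟶ P} (e : Homotopy (α ≫ β) 0) :
    pairing lam sP S (add_zero 0) (Cochain.ofHom α) (Cochain.ofHom β) = 0 := by
  obtain ⟨z, hz⟩ := Cochain.equivHomotopy _ _ e
  rw [Cochain.ofHom_zero, add_zero] at hz
  rw [pairing_apply, ← Cochain.ofHom_comp, hz, supertrace_δ_eq_zero lam sP hlam hP]

lemma supertrace_eq_of_mem {p : ℤ} (hp : p ∈ S) (z : Cochain P P 0)
    (hz : ∀ m, m ≠ p → z.v m m (add_zero m) = 0) :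
    supertrace lam sP S z = p.negOnePow • trace lam (sP p) (z.v p p (add_zero p)) :=
  Finset.sum_eq_single_of_mem p hp fun m _ hmp => by rw [hz m hmp, map_zero, smul_zero]

lemma pairing_single_right {n n' : ℤ} (h : n + n' = 0) (φ : Cochain P Q n) {p q : ℤ} (hp : p ∈ S)
    (hpq : p + n = q) (g : Q.X q ⟶ P.X p) :
    pairing lam sP S h φ (Cochain.single g n') =
      p.negOnePow • trace lam (sP p) (φ.v p q hpq ≫ g) := by
  rw [pairing_apply, supertrace_eq_of_mem lam sP hp _ fun m hmp => ?_,
    Cochain.comp_v φ _ h p q p hpq (by omega), Cochain.single_v]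
  rw [Cochain.comp_v φ _ h m (m + n) m rfl (by omega),
    Cochain.single_v_eq_zero' _ _ _ _ _ hmp, comp_zero]

lemma pairing_single_left {n n' : ℤ} (h : n + n' = 0) (ψ : Cochain Q P n') {p q : ℤ} (hp : p ∈ S)
    (hpq : p + n = q) (g : P.X p ⟶ Q.X q) :
    pairing lam sP S h (Cochain.single g n) ψ =
      p.negOnePow • trace lam (sP p) (g ≫ ψ.v q p (by omega)) := by
  rw [pairing_apply, supertrace_eq_of_mem lam sP hp _ fun m hmp => ?_,
    Cochain.comp_v _ ψ h p q p hpq (by omega), Cochain.single_v]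
  rw [Cochain.comp_v _ ψ h m (m + n) m rfl (by omega),
    Cochain.single_v_eq_zero _ _ _ _ _ hmp, zero_comp]

include sP in
lemma finiteDimensional_cochain [FiniteDimensional k A] (sQ : ∀ m, FreeRetract (Q.X m))
    (hP : ∀ m ∉ S, IsZero (P.X m)) (n : ℤ) :
    FiniteDimensional k (Cochain P Q n) := by
  have (m : S) : FiniteDimensional k (P.X m ⟶ Q.X (m + n)) :=
    finiteDimensional_hom (sP m) (sQ (m + n))
  let Φ : Cochain P Q n →ₗ[k] ∀ m : S, P.X m ⟶ Q.X (m + n) :=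
    { toFun φ m := φ.v m (m + n) rfl
      map_add' _ _ := rfl
      map_smul' _ _ := rfl }
  refine FiniteDimensional.of_injective Φ ((injective_iff_map_eq_zero Φ).2 fun φ hφ => ?_)
  refine Cochain.ext _ _ fun p q hpq => ?_
  obtain rfl := hpq
  by_cases hp : p ∈ S
  · exact congrFun hφ ⟨p, hp⟩
  · exact (hP p hp).eq_of_src _ _

variable (hlam : ∀ a b : A, lam (a * b) = lam (b * a))
  (hnd : ∀ a : A, (∀ b : A, lam (a * b) = 0) → a = 0)
  (sQ : ∀ m, FreeRetract (Q.X m)) (hP : ∀ m ∉ S, IsZero (P.X m))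
include hlam hnd sQ hP

lemma pairing_injective {n n' : ℤ} (h : n + n' = 0) :
    Function.Injective (pairing lam sP S (Q := Q) h) := by
  refine (injective_iff_map_eq_zero _).2 fun φ hφ => ?_
  refine Cochain.ext _ _ fun p q hpq => ?_
  rw [Cochain.zero_v]
  by_cases hp : p ∈ S
  · refine eq_zero_of_forall_trace_comp_eq_zero lam hlam hnd (sP p) (sQ q) _ fun g => ?_
    have := LinearMap.congr_fun hφ (Cochain.single g n')
    rwa [pairing_single_right lam sP h φ hp hpq, LinearMap.zero_apply,
      smul_eq_zero_iff_eq] at this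
  · exact (hP p hp).eq_of_src _ _

lemma pairing_flip_injective {n n' : ℤ} (h : n + n' = 0) :
    Function.Injective (pairing lam sP S (Q := Q) h).flip := by
  refine (injective_iff_map_eq_zero _).2 fun ψ hψ => ?_
  refine Cochain.ext _ _ fun q p hqp => ?_
  rw [Cochain.zero_v]
  by_cases hp : p ∈ S
  · refine eq_zero_of_forall_trace_comp_eq_zero lam hlam hnd (sQ q) (sP p) _ fun g => ?_
    have := LinearMap.congr_fun hψ (Cochain.single g n)
    rwa [LinearMap.flip_apply, pairing_single_left lam sP h ψ hp (by omega), LinearMap.zero_apply,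
      smul_eq_zero_iff_eq, trace_comp_comm lam hlam (sP p) (sQ q)] at this
  · exact (hP p hp).eq_of_tgt _ _

lemma nonempty_homotopy_zero_of_forall_pairing_eq_zero [FiniteDimensional k A] (α : P ⟶ Q)
    (hα : ∀ β : Q ⟶ P, pairing lam sP S (add_zero 0) (Cochain.ofHom α) (Cochain.ofHom β) = 0) :
    Nonempty (Homotopy α 0) := by
  have := finiteDimensional_cochain (k := k) sP sQ hP (-1)
  obtain ⟨ξ, hξ⟩ : pairing lam sP S (add_zero 0) (Cochain.ofHom α) ∈
      LinearMap.range (δ_hom k Q P 0 1).dualMap := by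
    rw [LinearMap.range_dualMap_eq_dualAnnihilator_ker, Submodule.mem_dualAnnihilator]
    intro ψ hψ
    have := hα (Cocycle.homOf (Cocycle.mk ψ 1 (zero_add 1) (LinearMap.mem_ker.1 hψ)))
    rwa [Cocycle.cochain_ofHom_homOf_eq_coe] at this
  obtain ⟨w, rfl⟩ := (LinearMap.IsPerfPair.of_injective
    (pairing_injective lam sP hlam hnd sQ hP (neg_add_cancel 1))
    (pairing_flip_injective lam sP hlam hnd sQ hP (neg_add_cancel 1))).bijective_left.2 ξ
  have hzero : Cochain.ofHom α + δ (-1) 0 w = 0 := by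
    refine pairing_injective lam sP hlam hnd sQ hP (add_zero 0) (LinearMap.ext fun ψ => ?_)
    rw [map_add, LinearMap.add_apply, pairing_δ_left lam sP hlam hP, ← hξ]
    simp [δ_hom]
  exact ⟨(Cochain.equivHomotopy α 0).symm ⟨-w, by
    rw [Cochain.ofHom_zero, add_zero, δ_neg, eq_neg_iff_add_eq_zero, hzero]⟩⟩

end Cochain

lemma eq_zero_of_forall_comp_eq_zero [FiniteDimensional k A] (hA : IsSymmetricAlgebra k A)
    {P Q : CochainComplex (ModuleCat.{u} A) ℤ} (hP : IsPerfect P)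
    (hQ : ∀ n, Module.Finite A (Q.X n) ∧ Module.Projective A (Q.X n))
    (α : (Kq A).obj P ⟶ (Kq A).obj Q) (hα : ∀ β : (Kq A).obj Q ⟶ (Kq A).obj P, α ≫ β = 0) :
    α = 0 := by
  obtain ⟨lam, hlam, hnd⟩ := hA
  obtain ⟨a, b, hab⟩ := hP.2
  obtain ⟨α, rfl⟩ := (Kq A).map_surjective α
  let sP m : FreeRetract (P.X m) := .ofFiniteProjective _ (hP.1 m).1 (hP.1 m).2
  let sQ m : FreeRetract (Q.X m) := .ofFiniteProjective _ (hQ m).1 (hQ m).2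
  have hPab : ∀ m ∉ Finset.Icc a b, IsZero (P.X m) := fun m hm =>
    hab m (by rw [Finset.mem_Icc] at hm; omega)
  obtain ⟨H⟩ := nonempty_homotopy_zero_of_forall_pairing_eq_zero lam sP hlam hnd sQ hPab α
    fun β => pairing_ofHom_eq_zero_of_homotopy lam sP hlam hPab
      (HomotopyCategory.homotopyOfEq _ _ (by simpa using hα ((Kq A).map β)))
  simpa using HomotopyCategory.eq_of_homotopy _ _ H

end SymmetricAlgebra

theorem statement_11_general (k : Type u) [Field k] (A : Type u) [Ring A] [Algebra k A]
    [FiniteDimensional k A] (hA : IsSymmetricAlgebra k A)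
    (X M' Y M : CochainComplex (ModuleCat.{u} A) ℤ)
    (hX : IsPerfect X) (hM : IsPerfect M)
    (f : (Kq A).obj X ⟶ (Kq A).obj M') (g : (Kq A).obj M' ⟶ (Kq A).obj Y)
    (h : (Kq A).obj Y ⟶ ((Kq A).obj X)⟦(1 : ℤ)⟧)
    (hdist : Triangle.mk f g h ∈
      distTriang (HomotopyCategory (ModuleCat.{u} A) (ComplexShape.up ℤ)))
    (ha : ∀ (i : ℤ) (u : (Kq A).obj X ⟶ (Kq A).obj (M⟦i⟧)),
      ∃ v : (Kq A).obj M' ⟶ (Kq A).obj (M⟦i⟧), u = f ≫ v) :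
    ∀ (i : ℤ) (v : (Kq A).obj (M⟦i⟧) ⟶ (Kq A).obj Y),
      ∃ w : (Kq A).obj (M⟦i⟧) ⟶ (Kq A).obj M', v = w ≫ g := by
  intro i v
  refine Triangle.coyoneda_exact₃ _ hdist v ?_
  show v ≫ h = 0
  have hfactor (u : (Kq A).obj X ⟶ ((Kq A).obj (M⟦i⟧))⟦(-1 : ℤ)⟧) : ∃ w, u = f ≫ w := by
    let e : (Kq A).obj (M⟦i + -1⟧) ≅ ((Kq A).obj (M⟦i⟧))⟦(-1 : ℤ)⟧ :=
      (Kq A).mapIso ((shiftFunctorAdd' _ i (-1) _ rfl).app M) ≪≫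
        ((Kq A).commShiftIso (-1 : ℤ)).app (M⟦i⟧)
    obtain ⟨w, hw⟩ := ha (i + -1) (u ≫ e.inv)
    exact ⟨w ≫ e.hom, by simp [← reassoc_of% hw]⟩
  have h_comp : ∀ γ, h ≫ γ = 0 := mor₃_comp_eq_zero_of_forall_factor _ hdist hfactor
  let e := ((Kq A).commShiftIso (1 : ℤ)).app X
  have hvh : v ≫ h ≫ e.inv = 0 :=
    SymmetricAlgebra.eq_zero_of_forall_comp_eq_zero hA (hM.shift i) (fun n => hX.1 (n + 1)) _
      fun β => by rw [assoc, assoc, h_comp, comp_zero]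
  simpa using hvh =≫ e.hom

/-- Over a finite-dimensional symmetric algebra, given a distinguished triangle
`X ⟶ M' ⟶ Y ⟶ X⟦1⟧` in `K^b(proj A)`, if every map `X ⟶ M⟦i⟧` factors through `f`
then every map `M⟦i⟧ ⟶ Y` factors through `g`. -/
theorem statement_11 (k : Type u) [Field k] (A : Type u) [Ring A] [Algebra k A]
    [FiniteDimensional k A] (hA : IsSymmetricAlgebra k A)
    (X M' Y M : CochainComplex (ModuleCat.{u} A) ℤ)
    (hX : IsPerfect X) (hM' : IsPerfect M') (hY : IsPerfect Y) (hM : IsPerfect M)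
    (f : (Kq A).obj X ⟶ (Kq A).obj M') (g : (Kq A).obj M' ⟶ (Kq A).obj Y)
    (h : (Kq A).obj Y ⟶ ((Kq A).obj X)⟦(1 : ℤ)⟧)
    (hdist : Triangle.mk f g h ∈
      distTriang (HomotopyCategory (ModuleCat.{u} A) (ComplexShape.up ℤ)))
    (ha : ∀ (i : ℤ) (u : (Kq A).obj X ⟶ (Kq A).obj (M⟦i⟧)),
      ∃ v : (Kq A).obj M' ⟶ (Kq A).obj (M⟦i⟧), u = f ≫ v) :
    ∀ (i : ℤ) (v : (Kq A).obj (M⟦i⟧) ⟶ (Kq A).obj Y),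
      ∃ w : (Kq A).obj (M⟦i⟧) ⟶ (Kq A).obj M', v = w ≫ g :=
  statement_11_general k A hA X M' Y M hX hM f g h hdist ha
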